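/- arXiv:1609.02332 — 2 statements merged into one kernel-verified Lean document; each statement's English description precedes it below -/
import Mathlib

section
/- Let w : [0,ε) × ℝ^n → ℝ be smooth with compact support in (0,ε) × ℝ^n (in the x-variable), and let μ ∈ (0,ε]. Then ∫₀^μ ∫ |x∂_x w + (n/2)w|² dν(y) dx/x = ∫₀^μ ∫ ((x∂_x w)² + (n²/4)w²) dν(y) dx/x + (n/2)∫ w(μ,y)² dν(y), where ν is any finite measure on ℝ^n. In particular, ∫ w(μ,y)² dν(y) ≤ (2/n) ∫₀^μ ∫ |x∂_x w + (n/2)w|² dν(y) dx/x. -/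
open MeasureTheory

/-- For w smooth on [0,ε)×ℝ^d, compactly supported with support in
(0,ε) in the x-variable, and any finite measure ν on ℝ^d and 0 < μ₀ ≤ ε:
∫₀^{μ₀}∫ |x∂_xw + (n/2)w|² dν dx/x
  = ∫₀^{μ₀}∫ ((x∂_xw)² + (n²/4)w²) dν dx/x + (n/2)∫ w(μ₀,y)² dν,
and in particular ∫ w(μ₀,y)² dν ≤ (2/n)∫₀^{μ₀}∫ |x∂_xw + (n/2)w|² dν dx/x. -/
theorem stmt9 (d : ℕ) (n ε μ₀ : ℝ) (hn : 1 ≤ n) (hε : 0 < ε)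
    (hμ : 0 < μ₀) (hμε : μ₀ ≤ ε)
    (ν : Measure (Fin d → ℝ)) [IsFiniteMeasure ν]
    (w : ℝ → (Fin d → ℝ) → ℝ)
    (hsm : ContDiff ℝ (⊤ : ℕ∞) (fun p : ℝ × (Fin d → ℝ) => w p.1 p.2))
    (hcpt : HasCompactSupport (fun p : ℝ × (Fin d → ℝ) => w p.1 p.2))
    (hsupp : ∀ (x : ℝ) (y : Fin d → ℝ), x ∉ Set.Ioo 0 ε → w x y = 0) :
    ((∫ x in Set.Ioc 0 μ₀,
        (∫ y, (x * deriv (fun x' => w x' y) x + (n/2) * w x y)^2 ∂ν) / x)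
      = (∫ x in Set.Ioc 0 μ₀,
          (∫ y, ((x * deriv (fun x' => w x' y) x)^2 + (n^2/4) * (w x y)^2) ∂ν) / x)
        + (n/2) * ∫ y, (w μ₀ y)^2 ∂ν) ∧
    ((∫ y, (w μ₀ y)^2 ∂ν)
      ≤ (2/n) * ∫ x in Set.Ioc 0 μ₀,
          (∫ y, (x * deriv (fun x' => w x' y) x + (n/2) * w x y)^2 ∂ν) / x) := by
  have hn0 : (0:ℝ) < n := lt_of_lt_of_le one_pos hn
  set W : ℝ × (Fin d → ℝ) → ℝ := fun p => w p.1 p.2 with hWdef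
  set D : ℝ → (Fin d → ℝ) → ℝ := fun x y => fderiv ℝ W (x, y) (1, 0) with hDdef
  -- slice derivative
  have hderiv : ∀ x y, HasDerivAt (fun x' => w x' y) (D x y) x := by
    intro x y
    have h1 : HasDerivAt (fun x' : ℝ => (x', y)) ((1 : ℝ), (0 : Fin d → ℝ)) x :=
      HasDerivAt.prodMk (hasDerivAt_id x) (hasDerivAt_const x y)
    exact ((hsm.differentiable (by simp) (x, y)).hasFDerivAt.comp_hasDerivAt x h1)
  have hderiv_eq : ∀ x y, deriv (fun x' => w x' y) x = D x y := fun x y => (hderiv x y).deriv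
  -- continuity
  have hW_cont : Continuous W := hsm.continuous
  have hD_cont : Continuous fun p : ℝ × (Fin d → ℝ) => D p.1 p.2 := by
    have : Continuous fun p : ℝ × (Fin d → ℝ) => fderiv ℝ W p ((1:ℝ), (0 : Fin d → ℝ)) :=
      (hsm.continuous_fderiv (by simp)).clm_apply continuous_const
    exact this
  -- bounds
  obtain ⟨Cw, hCw⟩ := hcpt.exists_bound_of_continuous hW_cont
  obtain ⟨Cd, hCd⟩ := (HasCompactSupport.fderiv_apply (𝕜 := ℝ) hcpt
      ((1:ℝ), (0 : Fin d → ℝ))).exists_bound_of_continuous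
      ((hsm.continuous_fderiv (by simp)).clm_apply continuous_const)
  have hCw' : ∀ x y, |w x y| ≤ Cw := fun x y => by simpa using hCw (x, y)
  have hCd' : ∀ x y, |D x y| ≤ Cd := fun x y => by simpa using hCd (x, y)
  have hCw0 : 0 ≤ Cw := le_trans (abs_nonneg _) (hCw' 0 0)
  have hCd0 : 0 ≤ Cd := le_trans (abs_nonneg _) (hCd' 0 0)
  have hw0 : ∀ y, w 0 y = 0 := fun y => hsupp 0 y (fun h => lt_irrefl 0 h.1)
  -- MVT bound: |w x y| ≤ Cd * x for x ≥ 0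
  have hwlin : ∀ x : ℝ, 0 ≤ x → ∀ y, |w x y| ≤ Cd * x := by
    intro x hx y
    have h := convex_univ.norm_image_sub_le_of_norm_hasDerivWithin_le
      (f := fun x' => w x' y) (f' := fun x' => D x' y)
      (fun z _ => (hderiv z y).hasDerivWithinAt)
      (fun z _ => by simpa using hCd' z y)
      (Set.mem_univ (0:ℝ)) (Set.mem_univ x)
    simpa [hw0 y, abs_of_nonneg hx] using h
  -- y-integrability helper
  have hIy : ∀ (f : (Fin d → ℝ) → ℝ) (B : ℝ), Continuous f → (∀ y, |f y| ≤ B) →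
      Integrable f ν := fun f B hc hb =>
    (integrable_const B).mono' hc.aestronglyMeasurable
      (Filter.Eventually.of_forall fun y => by simpa using hb y)
  have hwy : ∀ x, Continuous fun y => w x y := fun x => hW_cont.comp (Continuous.prodMk_right x)
  have hDy : ∀ x, Continuous fun y => D x y := fun x => hD_cont.comp (Continuous.prodMk_right x)
  have hwx : ∀ y, Continuous fun x => w x y :=
    fun y => hW_cont.comp (continuous_id.prodMk continuous_const)
  have hDx : ∀ y, Continuous fun x => D x y :=
    fun y => hD_cont.comp (continuous_id.prodMk continuous_const)
  set νr : ℝ := (ν Set.univ).toReal with hνr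
  have hνr0 : 0 ≤ νr := ENNReal.toReal_nonneg
  -- the main auxiliary functions
  set F : ℝ → ℝ := fun x => ∫ y, (w x y)^2 ∂ν with hFdef
  set H : ℝ → ℝ := fun x => ∫ y, (D x y)^2 ∂ν with hHdef
  set G : ℝ → ℝ := fun x => ∫ y, 2 * w x y * D x y ∂ν with hGdef
  have hintw2 : ∀ x, Integrable (fun y => (w x y)^2) ν := fun x =>
    hIy _ (Cw^2) ((hwy x).pow 2) (fun y => by
      rw [abs_pow]
      exact pow_le_pow_left₀ (abs_nonneg _) (hCw' x y) 2)
  have hintD2 : ∀ x, Integrable (fun y => (D x y)^2) ν := fun x =>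
    hIy _ (Cd^2) ((hDy x).pow 2) (fun y => by
      rw [abs_pow]
      exact pow_le_pow_left₀ (abs_nonneg _) (hCd' x y) 2)
  have hintwD : ∀ x, Integrable (fun y => 2 * w x y * D x y) ν := fun x =>
    hIy _ (2 * Cw * Cd) ((continuous_const.mul (hwy x)).mul (hDy x)) (fun y => by
      rw [abs_mul, abs_mul, abs_two]
      exact mul_le_mul (mul_le_mul_of_nonneg_left (hCw' x y) (by norm_num))
        (hCd' x y) (abs_nonneg _) (by positivity))
  -- continuity of F, H, G
  have hF_cont : Continuous F := by
    apply continuous_of_dominated (bound := fun _ => Cw^2)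
    · exact fun x => ((hwy x).pow 2).aestronglyMeasurable
    · intro x
      filter_upwards with y
      rw [Real.norm_eq_abs, abs_pow]
      exact pow_le_pow_left₀ (abs_nonneg _) (hCw' x y) 2
    · exact integrable_const _
    · filter_upwards with y
      exact (hwx y).pow 2
  have hH_cont : Continuous H := by
    apply continuous_of_dominated (bound := fun _ => Cd^2)
    · exact fun x => ((hDy x).pow 2).aestronglyMeasurable
    · intro x
      filter_upwards with y
      rw [Real.norm_eq_abs, abs_pow]
      exact pow_le_pow_left₀ (abs_nonneg _) (hCd' x y) 2
    · exact integrable_const _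
    · filter_upwards with y
      exact (hDx y).pow 2
  have hG_cont : Continuous G := by
    apply continuous_of_dominated (bound := fun _ => 2 * Cw * Cd)
    · exact fun x => ((continuous_const.mul (hwy x)).mul (hDy x)).aestronglyMeasurable
    · intro x
      filter_upwards with y
      rw [Real.norm_eq_abs, abs_mul, abs_mul, abs_two]
      exact mul_le_mul (mul_le_mul_of_nonneg_left (hCw' x y) (by norm_num))
        (hCd' x y) (abs_nonneg _) (by positivity)
    · exact integrable_const _
    · filter_upwards with y
      exact (continuous_const.mul (hwx y)).mul (hDx y)
  -- F is differentiable with derivative G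
  have hF_deriv : ∀ x₀ : ℝ, HasDerivAt F (G x₀) x₀ := by
    intro x₀
    have h := hasDerivAt_integral_of_dominated_loc_of_deriv_le (μ := ν)
      (F := fun x y => (w x y)^2) (F' := fun x y => 2 * w x y * D x y)
      (x₀ := x₀) (bound := fun _ => 2 * Cw * Cd) (s := Set.univ) Filter.univ_mem
      (Filter.Eventually.of_forall fun x => ((hwy x).pow 2).aestronglyMeasurable)
      (hintw2 x₀)
      ((continuous_const.mul (hwy x₀)).mul (hDy x₀)).aestronglyMeasurable
      (Filter.Eventually.of_forall fun y x _ => by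
        rw [Real.norm_eq_abs, abs_mul, abs_mul, abs_two]
        exact mul_le_mul (mul_le_mul_of_nonneg_left (hCw' x y) (by norm_num))
          (hCd' x y) (abs_nonneg _) (by positivity))
      (integrable_const _)
      (Filter.Eventually.of_forall fun y x _ => by
        have := (hderiv x y).fun_pow 2
        simpa [mul_assoc, mul_comm, mul_left_comm] using this)
    exact h.2
  -- FTC
  have hGIoc : ∫ x in Set.Ioc 0 μ₀, G x = F μ₀ := by
    have hFTC : ∫ x in (0:ℝ)..μ₀, G x = F μ₀ - F 0 :=
      intervalIntegral.integral_eq_sub_of_hasDerivAt (fun x _ => hF_deriv x)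
        (hG_cont.intervalIntegrable _ _)
    have hF0 : F 0 = 0 := by simp [hFdef, hw0]
    rw [← intervalIntegral.integral_of_le hμ.le, hFTC, hF0, sub_zero]
  -- bounds on H and F
  have hHbd : ∀ x, |H x| ≤ Cd^2 * νr := by
    intro x
    have := norm_integral_le_of_norm_le_const (μ := ν) (f := fun y => (D x y)^2)
      (C := Cd^2) (Filter.Eventually.of_forall fun y => by
        rw [Real.norm_eq_abs, abs_pow]
        exact pow_le_pow_left₀ (abs_nonneg _) (hCd' x y) 2)
    simpa [Real.norm_eq_abs, hνr, Measure.real] using this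
  have hFbd : ∀ x : ℝ, 0 ≤ x → |F x| ≤ Cd^2 * x^2 * νr := by
    intro x hx
    have := norm_integral_le_of_norm_le_const (μ := ν) (f := fun y => (w x y)^2)
      (C := Cd^2 * x^2) (Filter.Eventually.of_forall fun y => by
        rw [Real.norm_eq_abs, abs_pow]
        calc |w x y|^2 ≤ (Cd * x)^2 :=
              pow_le_pow_left₀ (abs_nonneg _) (hwlin x hx y) 2
          _ = Cd^2 * x^2 := by ring)
    simpa [Real.norm_eq_abs, hνr, mul_assoc, Measure.real] using this
  -- P
  set P : ℝ → ℝ := fun x => x^2 * H x + (n^2/4) * F x with hPdef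
  have hP_cont : Continuous P := ((continuous_id.pow 2).mul hH_cont).add
    (continuous_const.mul hF_cont)
  -- pointwise identities
  have key2 : ∀ x : ℝ, (∫ y, ((x * D x y)^2 + (n^2/4) * (w x y)^2) ∂ν) = P x := by
    intro x
    have h1 : Integrable (fun y => (x * D x y)^2) ν := by
      have := (hintD2 x).const_mul (x^2)
      simpa [mul_pow] using this
    rw [integral_add h1 ((hintw2 x).const_mul _)]
    congr 1
    · simp_rw [mul_pow]
      rw [integral_const_mul]
    · rw [integral_const_mul]
  have key1 : ∀ x : ℝ,
      (∫ y, (x * D x y + (n/2) * w x y)^2 ∂ν) = P x + (n*x/2) * G x := by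
    intro x
    have hexp : ∀ y, (x * D x y + (n/2) * w x y)^2
        = (((x * D x y)^2 + (n^2/4) * (w x y)^2) + (n*x/2) * (2 * w x y * D x y)) := by
      intro y; ring
    have h1 : Integrable (fun y => (x * D x y)^2) ν := by
      have := (hintD2 x).const_mul (x^2)
      simpa [mul_pow] using this
    have h2 : Integrable (fun y => ((x * D x y)^2 + (n^2/4) * (w x y)^2)) ν :=
      h1.add ((hintw2 x).const_mul _)
    simp_rw [hexp]
    rw [integral_add h2 ((hintwD x).const_mul _), key2 x, integral_const_mul]
  -- integrability on Ioc of P x / x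
  have hPx_contOn : ContinuousOn (fun x => P x / x) (Set.Ioc 0 μ₀) :=
    hP_cont.continuousOn.div continuousOn_id (fun x hx => ne_of_gt hx.1)
  have hPint : IntegrableOn (fun x => P x / x) (Set.Ioc 0 μ₀) := by
    refine Integrable.mono' (g := fun _ => μ₀ * (Cd^2 * νr) + (n^2/4) * (Cd^2 * μ₀ * νr))
      (integrable_const _) (hPx_contOn.aestronglyMeasurable measurableSet_Ioc) ?_
    rw [ae_restrict_iff' measurableSet_Ioc]
    filter_upwards with x hx
    have hx1 : 0 < x := hx.1
    have hx2 : x ≤ μ₀ := hx.2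
    have habs : |P x| ≤ x^2 * (Cd^2 * νr) + (n^2/4) * (Cd^2 * x^2 * νr) := by
      calc |P x| ≤ |x^2 * H x| + |(n^2/4) * F x| := abs_add_le _ _
        _ = x^2 * |H x| + (n^2/4) * |F x| := by
            rw [abs_mul, abs_mul, abs_of_nonneg (sq_nonneg x),
              abs_of_nonneg (by positivity : (0:ℝ) ≤ n^2/4)]
        _ ≤ x^2 * (Cd^2 * νr) + (n^2/4) * (Cd^2 * x^2 * νr) := by
            gcongr
            · exact hHbd x
            · exact hFbd x hx1.le
    have hxx : x^2 ≤ μ₀ * x := by nlinarith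
    have t1 : Cd^2*νr*x^2 ≤ Cd^2*νr*(μ₀*x) :=
      mul_le_mul_of_nonneg_left hxx (mul_nonneg (sq_nonneg Cd) hνr0)
    have t2 : n^2/4*(Cd^2*νr*x^2) ≤ n^2/4*(Cd^2*νr*(μ₀*x)) :=
      mul_le_mul_of_nonneg_left t1 (by positivity)
    rw [Real.norm_eq_abs, abs_div, abs_of_pos hx1, div_le_iff₀ hx1]
    nlinarith [habs, t1, t2]
  have hGint : IntegrableOn G (Set.Ioc 0 μ₀) :=
    (hG_cont.continuousOn.integrableOn_compact isCompact_Icc).mono_set Set.Ioc_subset_Icc_self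
  -- rewrite the goal
  simp only [hderiv_eq]
  have hFμ : (∫ y, (w μ₀ y)^2 ∂ν) = F μ₀ := rfl
  have hL : (∫ x in Set.Ioc 0 μ₀, (∫ y, (x * D x y + (n/2) * w x y)^2 ∂ν) / x)
      = (∫ x in Set.Ioc 0 μ₀, P x / x) + (n/2) * F μ₀ := by
    have e1 : ∫ x in Set.Ioc 0 μ₀, (∫ y, (x * D x y + (n/2) * w x y)^2 ∂ν) / x
        = ∫ x in Set.Ioc 0 μ₀, (P x / x + (n/2) * G x) := by
      apply setIntegral_congr_fun measurableSet_Ioc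
      intro x hx
      have hx0 : x ≠ 0 := ne_of_gt hx.1
      dsimp only
      rw [key1 x, add_div]
      congr 1
      field_simp
    rw [e1, integral_add hPint (hGint.const_mul _), integral_const_mul, hGIoc]
  have hR : (∫ x in Set.Ioc 0 μ₀, (∫ y, ((x * D x y)^2 + (n^2/4) * (w x y)^2) ∂ν) / x)
      = ∫ x in Set.Ioc 0 μ₀, P x / x := by
    apply setIntegral_congr_fun measurableSet_Ioc
    intro x _
    dsimp only
    rw [key2 x]
  have hQ0 : 0 ≤ ∫ x in Set.Ioc 0 μ₀, P x / x := by
    apply setIntegral_nonneg measurableSet_Ioc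
    intro x hx
    have hH0 : 0 ≤ H x := integral_nonneg fun y => sq_nonneg _
    have hF0' : 0 ≤ F x := integral_nonneg fun y => sq_nonneg _
    have hP0 : 0 ≤ P x := add_nonneg (mul_nonneg (sq_nonneg x) hH0)
      (mul_nonneg (by positivity) hF0')
    exact div_nonneg hP0 hx.1.le
  constructor
  · rw [hL, hR, hFμ]
  · rw [hL, hFμ]
    have hkey : (2/n) * ((∫ x in Set.Ioc 0 μ₀, P x / x) + (n/2) * F μ₀)
        = (2/n) * (∫ x in Set.Ioc 0 μ₀, P x / x) + F μ₀ := by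
      field_simp
    rw [hkey]
    have : 0 ≤ (2/n) * (∫ x in Set.Ioc 0 μ₀, P x / x) :=
      mul_nonneg (by positivity) hQ0
    linarith
end

section
/- Let q_L(s,σ,X,λ̃,Y,μ,x',...) = λ̃σ + (1/2)X(λ̃² + h(x'X, x'Y + y', μ)) with h smooth. Then with respect to the symplectic form dσ∧ds + dλ̃∧dX + dμ∧dY + dλ'∧dx' + dμ'∧dy', the Hamilton vector field of q_L has the form H_{q_L} = λ̃∂_s + (σ + Xλ̃)∂_X − (1/2)(λ̃² + h + x'X∂₁h)∂_{λ̃} + (X/2)H_h^{Y,μ} + T, where T involves only ∂_{λ'} and ∂_{μ'}. In particular H_{q_L} is smooth up to {x' = 0} and {X = 0}, tangent to {x' = 0}, and transversal to {X = 0} wherever σ ≠ 0. -/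
lemma fderiv_line {E : Type*} [NormedAddCommGroup E] [NormedSpace ℝ E] {f : E → ℝ} {p : E}
    (hf : DifferentiableAt ℝ f p) (v : E) :
    HasDerivAt (fun t : ℝ => f (p + t • v)) (fderiv ℝ f p v) 0 := by
  have hline : HasDerivAt (fun t : ℝ => p + t • v) v 0 := by
    simpa using ((hasDerivAt_id (0:ℝ)).smul_const v).const_add p
  have hf' : HasFDerivAt f (fderiv ℝ f p) (p + (0:ℝ) • v) := by
    simpa using hf.hasFDerivAt
  exact hf'.comp_hasDerivAt 0 hline

/-- For q_L = λ̃σ + (1/2)X(λ̃² + h(x'X, x'Y+y', μ)) on the phase space with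
coordinates p = (s, σ, X, λ̃, Y, μ, x', λ', y', μ') and symplectic form
dσ∧ds + dλ̃∧dX + dμ∧dY + dλ'∧dx' + dμ'∧dy', the Hamilton vector field is
H = λ̃∂_s + (σ+Xλ̃)∂_X − (1/2)(λ̃² + h + x'X∂₁h)∂_{λ̃} + (X/2)H_h^{Y,μ} + T with T only in
∂_{λ'}, ∂_{μ'}; it is smooth up to {x'=0} and {X=0}, tangent to {x'=0}, and transversal
to {X=0} wherever σ ≠ 0. -/
theorem stmt14 (n : ℕ) (h : ℝ → (Fin n → ℝ) → (Fin n → ℝ) → ℝ)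
    (hsmooth : ContDiff ℝ (⊤ : ℕ∞) (fun p : ℝ × (Fin n → ℝ) × (Fin n → ℝ) => h p.1 p.2.1 p.2.2))
    (qL : (ℝ × ℝ × ℝ × ℝ × (Fin n → ℝ) × (Fin n → ℝ) × ℝ × ℝ × (Fin n → ℝ) × (Fin n → ℝ)) → ℝ)
    (hqL : ∀ p : ℝ × ℝ × ℝ × ℝ × (Fin n → ℝ) × (Fin n → ℝ) × ℝ × ℝ × (Fin n → ℝ) × (Fin n → ℝ),
      qL p = p.2.2.2.1 * p.2.1 + (1/2) * p.2.2.1 * ((p.2.2.2.1)^2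
        + h (p.2.2.2.2.2.2.1 * p.2.2.1)
            (fun j => p.2.2.2.2.2.2.1 * p.2.2.2.2.1 j + p.2.2.2.2.2.2.2.2.1 j)
            p.2.2.2.2.2.1)) :
    -- q_L (hence its Hamilton vector field) is smooth up to {x' = 0} and {X = 0}
    ContDiff ℝ (⊤ : ℕ∞) qL ∧
    ∀ p : ℝ × ℝ × ℝ × ℝ × (Fin n → ℝ) × (Fin n → ℝ) × ℝ × ℝ × (Fin n → ℝ) × (Fin n → ℝ),
      -- ∂_σ q_L = λ̃  (coefficient of ∂_s)
      (fderiv ℝ qL p (0, 1, 0, 0, 0, 0, 0, 0, 0, 0) = p.2.2.2.1) ∧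
      -- ∂_{λ̃} q_L = σ + Xλ̃  (coefficient of ∂_X)
      (fderiv ℝ qL p (0, 0, 0, 1, 0, 0, 0, 0, 0, 0) = p.2.1 + p.2.2.1 * p.2.2.2.1) ∧
      -- ∂_X q_L = (1/2)(λ̃² + h + x'X ∂₁h)  (minus the coefficient of ∂_{λ̃})
      (fderiv ℝ qL p (0, 0, 1, 0, 0, 0, 0, 0, 0, 0) =
        (1/2) * ((p.2.2.2.1)^2
          + h (p.2.2.2.2.2.2.1 * p.2.2.1)
              (fun j => p.2.2.2.2.2.2.1 * p.2.2.2.2.1 j + p.2.2.2.2.2.2.2.2.1 j)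
              p.2.2.2.2.2.1
          + p.2.2.2.2.2.2.1 * p.2.2.1 *
            deriv (fun a => h a
              (fun j => p.2.2.2.2.2.2.1 * p.2.2.2.2.1 j + p.2.2.2.2.2.2.2.2.1 j)
              p.2.2.2.2.2.1) (p.2.2.2.2.2.2.1 * p.2.2.1))) ∧
      -- ∂_{μ_j} q_L = (X/2)∂_{μ_j}h  (coefficient of ∂_{Y_j} in (X/2)H_h^{Y,μ})
      (∀ j : Fin n, fderiv ℝ qL p (0, 0, 0, 0, 0, Pi.single j 1, 0, 0, 0, 0) =
        (p.2.2.1 / 2) * fderiv ℝ (fun μ'' => h (p.2.2.2.2.2.2.1 * p.2.2.1)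
            (fun i => p.2.2.2.2.2.2.1 * p.2.2.2.2.1 i + p.2.2.2.2.2.2.2.2.1 i) μ'')
          p.2.2.2.2.2.1 (Pi.single j 1)) ∧
      -- ∂_{Y_j} q_L = (X/2)∂_{Y_j}h  (minus the coefficient of ∂_{μ_j} in (X/2)H_h^{Y,μ})
      (∀ j : Fin n, fderiv ℝ qL p (0, 0, 0, 0, Pi.single j 1, 0, 0, 0, 0, 0) =
        (p.2.2.1 / 2) * fderiv ℝ (fun Y' : Fin n → ℝ => h (p.2.2.2.2.2.2.1 * p.2.2.1)
            (fun i => p.2.2.2.2.2.2.1 * Y' i + p.2.2.2.2.2.2.2.2.1 i) p.2.2.2.2.2.1)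
          p.2.2.2.2.1 (Pi.single j 1)) ∧
      -- the remaining part T of H involves only ∂_{λ'} and ∂_{μ'}:
      -- ∂_{λ'} q_L = 0 (no ∂_{x'} term, so H is tangent to {x' = 0}),
      (fderiv ℝ qL p (0, 0, 0, 0, 0, 0, 0, 1, 0, 0) = 0) ∧
      -- ∂_{μ'_j} q_L = 0 (no ∂_{y'} term),
      (∀ j : Fin n, fderiv ℝ qL p (0, 0, 0, 0, 0, 0, 0, 0, 0, Pi.single j 1) = 0) ∧
      -- ∂_s q_L = 0 (no ∂_σ term),
      (fderiv ℝ qL p (1, 0, 0, 0, 0, 0, 0, 0, 0, 0) = 0) ∧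
      -- transversality to {X = 0} where σ ≠ 0: the ∂_X coefficient equals σ ≠ 0 there
      (p.2.2.1 = 0 → p.2.1 ≠ 0 → fderiv ℝ qL p (0, 0, 0, 1, 0, 0, 0, 0, 0, 0) ≠ 0) := by
  have hqeq := funext hqL
  -- smoothness
  have hΦ : ContDiff ℝ (⊤ : ℕ∞) (fun p : ℝ × ℝ × ℝ × ℝ × (Fin n → ℝ) × (Fin n → ℝ) × ℝ × ℝ × (Fin n → ℝ) × (Fin n → ℝ) =>
      ((p.2.2.2.2.2.2.1 * p.2.2.1 : ℝ),
       ((fun j => p.2.2.2.2.2.2.1 * p.2.2.2.2.1 j + p.2.2.2.2.2.2.2.2.1 j) : Fin n → ℝ),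
       p.2.2.2.2.2.1)) := by fun_prop
  have hcomp : ContDiff ℝ (⊤ : ℕ∞) (fun p : ℝ × ℝ × ℝ × ℝ × (Fin n → ℝ) × (Fin n → ℝ) × ℝ × ℝ × (Fin n → ℝ) × (Fin n → ℝ) =>
      h (p.2.2.2.2.2.2.1 * p.2.2.1)
        (fun j => p.2.2.2.2.2.2.1 * p.2.2.2.2.1 j + p.2.2.2.2.2.2.2.2.1 j)
        p.2.2.2.2.2.1) := hsmooth.comp hΦ
  have hq : ContDiff ℝ (⊤ : ℕ∞) qL := by
    rw [hqeq]
    exact ContDiff.add (by fun_prop) (ContDiff.mul (by fun_prop) (ContDiff.add (by fun_prop) hcomp))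
  refine ⟨hq, ?_⟩
  have hd : Differentiable ℝ qL := hq.differentiable (by simp)
  have hHd : Differentiable ℝ (fun p : ℝ × (Fin n → ℝ) × (Fin n → ℝ) => h p.1 p.2.1 p.2.2) :=
    hsmooth.differentiable (by simp)
  rintro ⟨s, σ, X, lam, Y, μ, x1, lam1, y1, μ1⟩
  set P : ℝ × ℝ × ℝ × ℝ × (Fin n → ℝ) × (Fin n → ℝ) × ℝ × ℝ × (Fin n → ℝ) × (Fin n → ℝ) :=
    (s, σ, X, lam, Y, μ, x1, lam1, y1, μ1) with hP
  set vfun : Fin n → ℝ := fun i => x1 * Y i + y1 i with hvfun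
  set Ch : ℝ := h (x1 * X) vfun μ with hCh
  -- partial applications of h
  set φ : ℝ → ℝ := fun a => h a vfun μ with hφdef
  have hφd : DifferentiableAt ℝ φ (x1 * X) :=
    (hHd _).comp _ (differentiableAt_id.prodMk (differentiableAt_const (vfun, μ)))
  set g2 : (Fin n → ℝ) → ℝ := fun μ'' => h (x1 * X) vfun μ'' with hg2def
  have hg2d : DifferentiableAt ℝ g2 μ :=
    (hHd _).comp _ ((differentiableAt_const (x1 * X)).prodMk
      ((differentiableAt_const vfun).prodMk differentiableAt_id))
  set G : (Fin n → ℝ) → ℝ := fun Y' => h (x1 * X) (fun i => x1 * Y' i + y1 i) μ with hGdef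
  have hGd : DifferentiableAt ℝ G Y :=
    (hHd _).comp _ ((differentiableAt_const (x1 * X)).prodMk
      (((differentiableAt_id.const_smul x1).add_const y1).prodMk (differentiableAt_const μ)))
  -- direction σ
  have hσ : fderiv ℝ qL P (0, 1, 0, 0, 0, 0, 0, 0, 0, 0) = lam := by
    have key := fderiv_line (hd P) ((0, 1, 0, 0, 0, 0, 0, 0, 0, 0) :
      ℝ × ℝ × ℝ × ℝ × (Fin n → ℝ) × (Fin n → ℝ) × ℝ × ℝ × (Fin n → ℝ) × (Fin n → ℝ))
    have e : (fun t : ℝ => qL (P + t • (0, 1, 0, 0, 0, 0, 0, 0, 0, 0)))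
        = fun t : ℝ => lam * (σ + t) + 1/2 * X * (lam ^ 2 + Ch) := by
      funext t
      rw [hqL]
      simp only [Prod.mk_add_mk, Prod.smul_mk, smul_eq_mul, smul_zero, add_zero, mul_zero,
        mul_one, hP, hCh, hvfun]
    rw [e] at key
    have tot : HasDerivAt (fun t : ℝ => lam * (σ + t) + 1/2 * X * (lam ^ 2 + Ch)) lam 0 := by
      have := (((hasDerivAt_id (0:ℝ)).const_add σ).const_mul lam).add_const (1/2 * X * (lam ^ 2 + Ch))
      simpa using this
    exact key.unique tot
  -- direction λ̃
  have hlam : fderiv ℝ qL P (0, 0, 0, 1, 0, 0, 0, 0, 0, 0) = σ + X * lam := by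
    have key := fderiv_line (hd P) ((0, 0, 0, 1, 0, 0, 0, 0, 0, 0) :
      ℝ × ℝ × ℝ × ℝ × (Fin n → ℝ) × (Fin n → ℝ) × ℝ × ℝ × (Fin n → ℝ) × (Fin n → ℝ))
    have e : (fun t : ℝ => qL (P + t • (0, 0, 0, 1, 0, 0, 0, 0, 0, 0)))
        = fun t : ℝ => (lam + t) * σ + 1/2 * X * ((lam + t) ^ 2 + Ch) := by
      funext t
      rw [hqL]
      simp only [Prod.mk_add_mk, Prod.smul_mk, smul_eq_mul, smul_zero, add_zero, mul_zero,
        mul_one, hP, hCh, hvfun]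
    rw [e] at key
    have h1 : HasDerivAt (fun t : ℝ => lam + t) 1 0 := (hasDerivAt_id (0:ℝ)).const_add lam
    have tot := (h1.mul_const σ).add (((h1.pow 2).add_const Ch).const_mul (1/2 * X))
    have tot' : HasDerivAt (fun t : ℝ => (lam + t) * σ + 1/2 * X * ((lam + t) ^ 2 + Ch))
        (σ + X * lam) 0 := by
      refine tot.congr_deriv ?_
      norm_num
      ring
    exact key.unique tot'
  -- direction X
  have hX : fderiv ℝ qL P (0, 0, 1, 0, 0, 0, 0, 0, 0, 0)
      = 1/2 * (lam ^ 2 + Ch + x1 * X * deriv φ (x1 * X)) := by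
    have key := fderiv_line (hd P) ((0, 0, 1, 0, 0, 0, 0, 0, 0, 0) :
      ℝ × ℝ × ℝ × ℝ × (Fin n → ℝ) × (Fin n → ℝ) × ℝ × ℝ × (Fin n → ℝ) × (Fin n → ℝ))
    have e : (fun t : ℝ => qL (P + t • (0, 0, 1, 0, 0, 0, 0, 0, 0, 0)))
        = fun t : ℝ => lam * σ + 1/2 * (X + t) * (lam ^ 2 + φ (x1 * (X + t))) := by
      funext t
      rw [hqL]
      simp only [Prod.mk_add_mk, Prod.smul_mk, smul_eq_mul, smul_zero, add_zero, mul_zero,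
        mul_one, hP, hφdef, hvfun]
    rw [e] at key
    have hφ' : HasDerivAt φ (deriv φ (x1 * X)) (x1 * (X + 0)) := by
      rw [add_zero]; exact hφd.hasDerivAt
    have hlin : HasDerivAt (fun t : ℝ => x1 * (X + t)) x1 0 := by
      simpa using (((hasDerivAt_id (0:ℝ)).const_add X).const_mul x1)
    have hg : HasDerivAt (fun t : ℝ => φ (x1 * (X + t))) (deriv φ (x1 * X) * x1) 0 :=
      hφ'.comp (h := fun t : ℝ => x1 * (X + t)) 0 hlin
    have ha : HasDerivAt (fun t : ℝ => 1/2 * (X + t)) (1/2 * 1) 0 :=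
      ((hasDerivAt_id (0:ℝ)).const_add X).const_mul (1/2)
    have hb : HasDerivAt (fun t : ℝ => lam ^ 2 + φ (x1 * (X + t)))
        (deriv φ (x1 * X) * x1) 0 := hg.const_add (lam ^ 2)
    have tot := (ha.mul hb).const_add (lam * σ)
    have tot' : HasDerivAt (fun t : ℝ => lam * σ + 1/2 * (X + t) * (lam ^ 2 + φ (x1 * (X + t))))
        (1/2 * (lam ^ 2 + Ch + x1 * X * deriv φ (x1 * X))) 0 := by
      refine tot.congr_deriv ?_
      simp only [add_zero, mul_one, hCh, hφdef]
      ring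
    exact key.unique tot'
  -- direction μ_j
  have hμ : ∀ j : Fin n, fderiv ℝ qL P (0, 0, 0, 0, 0, Pi.single j 1, 0, 0, 0, 0)
      = X / 2 * fderiv ℝ g2 μ (Pi.single j 1) := by
    intro j
    have key := fderiv_line (hd P) ((0, 0, 0, 0, 0, Pi.single j 1, 0, 0, 0, 0) :
      ℝ × ℝ × ℝ × ℝ × (Fin n → ℝ) × (Fin n → ℝ) × ℝ × ℝ × (Fin n → ℝ) × (Fin n → ℝ))
    have e : (fun t : ℝ => qL (P + t • (0, 0, 0, 0, 0, Pi.single j 1, 0, 0, 0, 0)))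
        = fun t : ℝ => lam * σ + 1/2 * X * (lam ^ 2 + g2 (μ + t • (Pi.single j 1 : Fin n → ℝ))) := by
      funext t
      rw [hqL]
      simp only [Prod.mk_add_mk, Prod.smul_mk, smul_eq_mul, smul_zero, add_zero, mul_zero,
        mul_one, hP, hg2def, hvfun]
    rw [e] at key
    have tot := ((fderiv_line hg2d (Pi.single j 1)).const_add (lam ^ 2)).const_mul
      (1/2 * X) |>.const_add (lam * σ)
    have heq : fderiv ℝ qL P (0, 0, 0, 0, 0, Pi.single j 1, 0, 0, 0, 0)
        = 1/2 * X * fderiv ℝ g2 μ (Pi.single j 1) := key.unique tot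
    rw [heq]; ring
  -- direction Y_j
  have hY : ∀ j : Fin n, fderiv ℝ qL P (0, 0, 0, 0, Pi.single j 1, 0, 0, 0, 0, 0)
      = X / 2 * fderiv ℝ G Y (Pi.single j 1) := by
    intro j
    have key := fderiv_line (hd P) ((0, 0, 0, 0, Pi.single j 1, 0, 0, 0, 0, 0) :
      ℝ × ℝ × ℝ × ℝ × (Fin n → ℝ) × (Fin n → ℝ) × ℝ × ℝ × (Fin n → ℝ) × (Fin n → ℝ))
    have e : (fun t : ℝ => qL (P + t • (0, 0, 0, 0, Pi.single j 1, 0, 0, 0, 0, 0)))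
        = fun t : ℝ => lam * σ + 1/2 * X * (lam ^ 2 + G (Y + t • (Pi.single j 1 : Fin n → ℝ))) := by
      funext t
      rw [hqL]
      simp only [Prod.mk_add_mk, Prod.smul_mk, smul_eq_mul, smul_zero, add_zero, mul_zero,
        mul_one, hP, hGdef]
    rw [e] at key
    have tot := ((fderiv_line hGd (Pi.single j 1)).const_add (lam ^ 2)).const_mul
      (1/2 * X) |>.const_add (lam * σ)
    have heq : fderiv ℝ qL P (0, 0, 0, 0, Pi.single j 1, 0, 0, 0, 0, 0)
        = 1/2 * X * fderiv ℝ G Y (Pi.single j 1) := key.unique tot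
    rw [heq]; ring
  -- zero directions
  have hzero : ∀ v : ℝ × ℝ × ℝ × ℝ × (Fin n → ℝ) × (Fin n → ℝ) × ℝ × ℝ × (Fin n → ℝ) × (Fin n → ℝ),
      (fun t : ℝ => qL (P + t • v)) = (fun _ : ℝ => lam * σ + 1/2 * X * (lam ^ 2 + Ch)) →
      fderiv ℝ qL P v = 0 := by
    intro v hv
    have key := fderiv_line (hd P) v
    rw [hv] at key
    exact key.unique (hasDerivAt_const 0 _)
  have hlamp : fderiv ℝ qL P (0, 0, 0, 0, 0, 0, 0, 1, 0, 0) = 0 := by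
    apply hzero
    funext t
    rw [hqL]
    simp only [Prod.mk_add_mk, Prod.smul_mk, smul_eq_mul, smul_zero, add_zero, mul_zero,
      mul_one, hP, hCh, hvfun]
  have hμ' : ∀ j : Fin n, fderiv ℝ qL P (0, 0, 0, 0, 0, 0, 0, 0, 0, Pi.single j 1) = 0 := by
    intro j
    apply hzero
    funext t
    rw [hqL]
    simp only [Prod.mk_add_mk, Prod.smul_mk, smul_eq_mul, smul_zero, add_zero, mul_zero,
      mul_one, hP, hCh, hvfun]
  have hs : fderiv ℝ qL P (1, 0, 0, 0, 0, 0, 0, 0, 0, 0) = 0 := by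
    apply hzero
    funext t
    rw [hqL]
    simp only [Prod.mk_add_mk, Prod.smul_mk, smul_eq_mul, smul_zero, add_zero, mul_zero,
      mul_one, hP, hCh, hvfun]
  refine ⟨hσ, hlam, hX, hμ, hY, hlamp, hμ', hs, ?_⟩
  intro hX0 hσ0
  rw [hlam]
  show σ + X * lam ≠ 0
  have hX0' : X = 0 := hX0
  have hσ0' : σ ≠ 0 := hσ0
  rw [hX0']
  simpa using hσ0'
end
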